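/- Let R be a commutative noetherian ring of prime characteristic p and I ⊆ R an ideal. Then there exists b ∈ ℕ such that for every f in the Frobenius closure I^F one has f^(p^b) ∈ I^[p^b]. -/
import Mathlib


/-- The `q`-th Frobenius power `I^[q]` of an ideal. -/
def frobeniusPower {R : Type*} [CommRing R] (I : Ideal R) (q : ℕ) : Ideal R :=
  Ideal.span ((fun x => x ^ q) '' (I : Set R))

section Aux

variable {R : Type*} [CommRing R] (p : ℕ) [Fact p.Prime] [CharP R p]

lemma fp_step (I : Ideal R) (q : ℕ) {x : R} (hx : x ∈ frobeniusPower I q) :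
    x ^ p ∈ frobeniusPower I (q * p) := by
  have h : Ideal.map (frobenius R p) (frobeniusPower I q) ≤ frobeniusPower I (q * p) := by
    rw [frobeniusPower, Ideal.map_span, Ideal.span_le]
    rintro _ ⟨_, ⟨y, hy, rfl⟩, rfl⟩
    apply Ideal.subset_span
    exact ⟨y, hy, by simp [frobenius_def, ← pow_mul]⟩
  have := h (Ideal.mem_map_of_mem _ hx)
  simpa [frobenius_def] using this

lemma fp_up (I : Ideal R) {f : R} {e b : ℕ} (heb : e ≤ b)
    (h : f ^ p ^ e ∈ frobeniusPower I (p ^ e)) :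
    f ^ p ^ b ∈ frobeniusPower I (p ^ b) := by
  induction b with
  | zero => simpa [Nat.le_zero.mp heb] using h
  | succ n ih =>
    rcases Nat.lt_or_ge e (n + 1) with h' | h'
    · have := fp_step p I (p ^ n) (ih (Nat.lt_succ_iff.mp h'))
      simpa [pow_succ, pow_mul] using this
    · have : e = n + 1 := le_antisymm heb h'
      subst this; exact h

/-- The Frobenius closure of an ideal, as an ideal. -/
def frobClosure (I : Ideal R) : Ideal R where
  carrier := {f | ∃ e, f ^ p ^ e ∈ frobeniusPower I (p ^ e)}
  zero_mem' := ⟨0, by simp⟩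
  add_mem' := by
    rintro a b ⟨e, he⟩ ⟨e', he'⟩
    refine ⟨max e e', ?_⟩
    have ha := fp_up p I (le_max_left e e') he
    have hb := fp_up p I (le_max_right e e') he'
    rw [add_pow_char_pow]
    exact add_mem ha hb
  smul_mem' := by
    rintro c x ⟨e, he⟩
    exact ⟨e, by rw [smul_eq_mul, mul_pow]; exact Ideal.mul_mem_left _ _ he⟩

end Aux

/-- In a commutative noetherian ring of prime characteristic `p`,
for every ideal `I` there exists `b` such that every element `f` of the Frobenius
closure of `I` satisfies `f^(p^b) ∈ I^[p^b]`. -/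
theorem exists_uniform_frobenius_exponent {R : Type*} [CommRing R] [IsNoetherianRing R]
    (p : ℕ) [Fact p.Prime] [CharP R p] (I : Ideal R) :
    ∃ b : ℕ, ∀ f : R, (∃ e : ℕ, f ^ p ^ e ∈ frobeniusPower I (p ^ e)) →
      f ^ p ^ b ∈ frobeniusPower I (p ^ b) := by
  obtain ⟨S, hS⟩ := IsNoetherian.noetherian (frobClosure p I)
  have hmem : ∀ s ∈ S, ∃ e : ℕ, s ^ p ^ e ∈ frobeniusPower I (p ^ e) := by
    intro s hs
    have : s ∈ frobClosure p I := hS ▸ Submodule.subset_span hs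
    exact this
  choose! e he using hmem
  refine ⟨S.sup e, fun f hf => ?_⟩
  have hf' : f ∈ frobClosure p I := hf
  rw [← hS] at hf'
  have key : Ideal.span (S : Set R) ≤
      Ideal.comap (iterateFrobenius R p (S.sup e)) (frobeniusPower I (p ^ S.sup e)) := by
    rw [Ideal.span_le]
    intro s hs
    rw [SetLike.mem_coe, Ideal.mem_comap, iterateFrobenius_def]
    exact fp_up p I (Finset.le_sup hs) (he s hs)
  have := key hf'
  rwa [Ideal.mem_comap, iterateFrobenius_def] at this
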